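/- Let Ω ⊆ ℝⁿ be a nonempty closed set, u ∈ 𝕊, and d_Ω(x) = inf_{y∈Ω} ‖x − y‖ the distance function. If Ω is unbounded, then ∂d_Ω(∞;u) = (N_Ω(∞;u) ∩ 𝔹) ∪ 𝔼, where 𝔼 is the set of all limits ξ = lim_k (x_k − y_k)/d_Ω(x_k) with x_k ∉ Ω, ‖x_k‖ → ∞, x_k/‖x_k‖ → u, and y_k a nearest point to x_k in Ω. If Ω is bounded, then ∂d_Ω(∞;u) = {u}. -/

import Mathlib

open Filter Topology Set
open scoped RealInnerProductSpace Pointwise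

noncomputable section

/-- `ℝⁿ` with the Euclidean structure. -/
abbrev Eu (n : ℕ) := EuclideanSpace ℝ (Fin n)

/-- The Fréchet (regular) normal cone to `Ω ⊆ ℝⁿ` at `xc` (empty when `xc ∉ Ω`):
`v` belongs to it iff `limsup_{x → xc, x ∈ Ω} ⟪v, x - xc⟫ / ‖x - xc‖ ≤ 0`. -/
def frechetNC {n : ℕ} (Ω : Set (Eu n)) (xc : Eu n) : Set (Eu n) :=
  {v | xc ∈ Ω ∧ ∀ ε > 0, ∃ δ > 0, ∀ x ∈ Ω, ‖x - xc‖ < δ →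
        ⟪v, x - xc⟫ ≤ ε * ‖x - xc‖}

/-- `x_k →ᵘ ∞` : `‖x_k‖ → ∞` and `x_k / ‖x_k‖ → u`. -/
def TendstoDirInfty {n : ℕ} (x : ℕ → Eu n) (u : Eu n) : Prop :=
  Tendsto (fun k => ‖x k‖) atTop atTop ∧
  Tendsto (fun k => ‖x k‖⁻¹ • x k) atTop (𝓝 u)

/-- The normal cone to `Ω` in direction `u` at infinity:
limits of Fréchet normals along sequences `x_k →^{Ω,u} ∞`. -/
def dirNCInfty {n : ℕ} (Ω : Set (Eu n)) (u : Eu n) : Set (Eu n) :=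
  {ξ | ∃ (x w : ℕ → Eu n), (∀ k, x k ∈ Ω) ∧ TendstoDirInfty x u ∧
      (∀ k, w k ∈ frechetNC Ω (x k)) ∧ Tendsto w atTop (𝓝 ξ)}

/-- The Euclidean norm of `p ∈ ℝⁿ × ℝ`. -/
def pnorm {n : ℕ} (p : Eu n × ℝ) : ℝ := Real.sqrt (‖p.1‖ ^ 2 + p.2 ^ 2)

/-- The Euclidean inner product on `ℝⁿ × ℝ`. -/
def pinner {n : ℕ} (v p : Eu n × ℝ) : ℝ := ⟪v.1, p.1⟫ + v.2 * p.2

/-- The Fréchet (regular) normal cone to `S ⊆ ℝⁿ × ℝ` at `q` (empty when `q ∉ S`). -/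
def frechetNCP {n : ℕ} (S : Set (Eu n × ℝ)) (q : Eu n × ℝ) : Set (Eu n × ℝ) :=
  {w | q ∈ S ∧ ∀ ε > 0, ∃ δ > 0, ∀ p ∈ S, pnorm (p - q) < δ →
        pinner w (p - q) ≤ ε * pnorm (p - q)}

/-- Epigraph of a real-valued `f : ℝⁿ → ℝ`. -/
def epigraphR {n : ℕ} (f : Eu n → ℝ) : Set (Eu n × ℝ) := {p | f p.1 ≤ p.2}

/-- The limiting subdifferential of a real-valued `f` in direction `u` at infinity. -/
def dirSubdiffInftyR {n : ℕ} (f : Eu n → ℝ) (u : Eu n) : Set (Eu n) :=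
  {ξ | ∃ (x : ℕ → Eu n) (r : ℕ → ℝ) (w : ℕ → Eu n × ℝ),
      TendstoDirInfty x u ∧ (∀ k, f (x k) ≤ r k) ∧
      (∀ k, w k ∈ frechetNCP (epigraphR f) (x k, r k)) ∧
      Tendsto w atTop (𝓝 (ξ, (-1 : ℝ)))}

/-- The singular subdifferential of a real-valued `f` in direction `u` at infinity. -/
def dirSingSubdiffInftyR {n : ℕ} (f : Eu n → ℝ) (u : Eu n) : Set (Eu n) :=
  {ξ | ∃ (x : ℕ → Eu n) (r : ℕ → ℝ) (w : ℕ → Eu n × ℝ),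
      TendstoDirInfty x u ∧ (∀ k, f (x k) ≤ r k) ∧
      (∀ k, w k ∈ frechetNCP (epigraphR f) (x k, r k)) ∧
      Tendsto w atTop (𝓝 (ξ, (0 : ℝ)))}

/-- The set `𝔼` of limits `(x_k - Π_Ω(x_k)) / d_Ω(x_k)` along `x_k →ᵘ ∞`, `x_k ∉ Ω`. -/
def Eset {n : ℕ} (Ω : Set (Eu n)) (u : Eu n) : Set (Eu n) :=
  {ξ | ∃ (x y : ℕ → Eu n), (∀ k, x k ∉ Ω) ∧ TendstoDirInfty x u ∧
      (∀ k, y k ∈ Ω ∧ ‖x k - y k‖ = Metric.infDist (x k) Ω) ∧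
      Tendsto (fun k => (Metric.infDist (x k) Ω)⁻¹ • (x k - y k)) atTop (𝓝 ξ)}

section Lemmas
variable {n : ℕ} (Ω : Set (Eu n))

/-- Fréchet subgradient of the distance function. -/
def FS (v x : Eu n) : Prop :=
  ∀ ε > 0, ∃ δ > 0, ∀ z, ‖z - x‖ < δ →
    ⟪v, z - x⟫ ≤ Metric.infDist z Ω - Metric.infDist x Ω + ε * ‖z - x‖

variable {Ω}

lemma lip_d (x z : Eu n) : Metric.infDist x Ω ≤ Metric.infDist z Ω + ‖x - z‖ := by
  simpa [dist_eq_norm] using Metric.infDist_le_infDist_add_dist (x := x) (y := z) (s := Ω)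

lemma abs_d_sub (x z : Eu n) : |Metric.infDist x Ω - Metric.infDist z Ω| ≤ ‖x - z‖ := by
  rw [abs_sub_le_iff]
  have h1 := lip_d (Ω := Ω) x z
  have h2 := lip_d (Ω := Ω) z x
  have h3 : ‖z - x‖ = ‖x - z‖ := norm_sub_rev _ _
  constructor <;> linarith

lemma pnorm_nonneg (p : Eu n × ℝ) : 0 ≤ pnorm p := Real.sqrt_nonneg _

lemma fst_le_pnorm (p : Eu n × ℝ) : ‖p.1‖ ≤ pnorm p := by
  rw [pnorm, Real.le_sqrt (norm_nonneg _)]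
  · nlinarith [sq_nonneg p.2]
  · positivity

lemma snd_le_pnorm (p : Eu n × ℝ) : |p.2| ≤ pnorm p := by
  rw [pnorm, Real.le_sqrt (abs_nonneg _)]
  · nlinarith [sq_abs p.2, sq_nonneg ‖p.1‖]
  · positivity

lemma pnorm_le_add (p : Eu n × ℝ) : pnorm p ≤ ‖p.1‖ + |p.2| := by
  rw [pnorm]
  have h : ‖p.1‖ + |p.2| = Real.sqrt ((‖p.1‖ + |p.2|) ^ 2) := (Real.sqrt_sq (by positivity)).symm
  rw [h]
  exact Real.sqrt_le_sqrt (by nlinarith [norm_nonneg p.1, abs_nonneg p.2, sq_abs p.2])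

end Lemmas
section Lemmas2
variable {n : ℕ} {Ω : Set (Eu n)}

lemma pnorm_zero_snd (a : ℝ) : pnorm ((0 : Eu n), a) = |a| := by
  simp [pnorm, Real.sqrt_sq_eq_abs]

/-- L2: a Fréchet subgradient of `d` gives an epigraph normal. -/
lemma fs_to_ncp {v x : Eu n} (h : FS Ω v x) :
    (v, (-1:ℝ)) ∈ frechetNCP (epigraphR (fun z => Metric.infDist z Ω))
      (x, Metric.infDist x Ω) := by
  simp only [frechetNCP, Set.mem_setOf_eq, epigraphR]
  refine ⟨le_refl _, fun ε hε => ?_⟩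
  obtain ⟨δ, hδ, hδ'⟩ := h ε hε
  refine ⟨δ, hδ, fun p hp hpn => ?_⟩
  have h1 : ‖p.1 - x‖ < δ :=
    lt_of_le_of_lt (fst_le_pnorm (p - (x, Metric.infDist x Ω))) hpn
  have h2 := hδ' p.1 h1
  have h3 : ε * ‖p.1 - x‖ ≤ ε * pnorm (p - (x, Metric.infDist x Ω)) :=
    mul_le_mul_of_nonneg_left (fst_le_pnorm (p - (x, Metric.infDist x Ω))) hε.le
  have hp' : Metric.infDist p.1 Ω ≤ p.2 := hp
  simp only [pinner]
  have e1 : (p - (x, Metric.infDist x Ω)).1 = p.1 - x := rfl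
  have e2 : (p - (x, Metric.infDist x Ω)).2 = p.2 - Metric.infDist x Ω := rfl
  rw [e1, e2]
  nlinarith [h2, hp', h3]

/-- L3: an epigraph normal with negative last component gives a Fréchet subgradient. -/
lemma ncp_to_fs {ξ : Eu n} {s : ℝ} (hs : 0 < s) {x : Eu n} {r : ℝ}
    (h : (ξ, -s) ∈ frechetNCP (epigraphR (fun z => Metric.infDist z Ω)) (x, r)) :
    r = Metric.infDist x Ω ∧ FS Ω (s⁻¹ • ξ) x := by
  simp only [frechetNCP, Set.mem_setOf_eq] at h
  obtain ⟨hmem, hnc⟩ := h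
  have hmem' : Metric.infDist x Ω ≤ r := hmem
  have hr : r = Metric.infDist x Ω := by
    by_contra hne'
    have hlt : Metric.infDist x Ω < r := lt_of_le_of_ne hmem' (Ne.symm hne')
    obtain ⟨δ, hδ, hδ'⟩ := hnc (s/2) (by linarith)
    set t := min (δ/2) (r - Metric.infDist x Ω) with ht
    have ht0 : 0 < t := lt_min (by linarith) (by linarith)
    have hp : ((x, r - t) : Eu n × ℝ) ∈ epigraphR (fun z => Metric.infDist z Ω) := by
      have : t ≤ r - Metric.infDist x Ω := min_le_right _ _
      show Metric.infDist x Ω ≤ r - t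
      linarith
    have hsub : ((x, r - t) : Eu n × ℝ) - (x, r) = ((0 : Eu n), -t) := by
      ext <;> simp
    have hpn : pnorm (((x, r - t) : Eu n × ℝ) - (x, r)) < δ := by
      rw [hsub, pnorm_zero_snd, abs_neg, abs_of_pos ht0]
      exact lt_of_le_of_lt (min_le_left _ _) (by linarith)
    have := hδ' _ hp hpn
    rw [hsub, pnorm_zero_snd, abs_neg, abs_of_pos ht0] at this
    simp only [pinner, inner_zero_right] at this
    nlinarith
  refine ⟨hr, fun ε hε => ?_⟩
  obtain ⟨δ, hδ, hδ'⟩ := hnc (ε * s / 2) (by positivity)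
  refine ⟨δ/2, by linarith, fun z hz => ?_⟩
  have hp : ((z, Metric.infDist z Ω) : Eu n × ℝ) ∈ epigraphR (fun w => Metric.infDist w Ω) := by
    simp only [epigraphR, Set.mem_setOf_eq]
    exact le_refl _
  have e1 : (((z, Metric.infDist z Ω) : Eu n × ℝ) - (x, r)).1 = z - x := rfl
  have e2 : (((z, Metric.infDist z Ω) : Eu n × ℝ) - (x, r)).2 = Metric.infDist z Ω - r := rfl
  have habs : |Metric.infDist z Ω - r| ≤ ‖z - x‖ := by rw [hr]; exact abs_d_sub z x
  have hpn : pnorm (((z, Metric.infDist z Ω) : Eu n × ℝ) - (x, r)) ≤ 2 * ‖z - x‖ := by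
    refine le_trans (pnorm_le_add _) ?_
    rw [e1, e2]; linarith
  have key := hδ' _ hp (lt_of_le_of_lt hpn (by linarith))
  simp only [pinner, e1, e2] at key
  have hpn0 : 0 ≤ pnorm (((z, Metric.infDist z Ω) : Eu n × ℝ) - (x, r)) := pnorm_nonneg _
  have h2 : ⟪ξ, z - x⟫ - s * (Metric.infDist z Ω - r) ≤ ε * s * ‖z - x‖ := by
    calc ⟪ξ, z - x⟫ - s * (Metric.infDist z Ω - r)
        = ⟪ξ, z - x⟫ + (-s) * (Metric.infDist z Ω - r) := by ring
      _ ≤ ε * s / 2 * pnorm (((z, Metric.infDist z Ω) : Eu n × ℝ) - (x, r)) := key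
      _ ≤ ε * s / 2 * (2 * ‖z - x‖) := by
          exact mul_le_mul_of_nonneg_left hpn (by positivity)
      _ = ε * s * ‖z - x‖ := by ring
  rw [hr] at h2
  rw [real_inner_smul_left]
  have h3 : ⟪ξ, z - x⟫ ≤ s * (Metric.infDist z Ω - Metric.infDist x Ω) + ε * s * ‖z - x‖ := by
    linarith
  calc s⁻¹ * ⟪ξ, z - x⟫
      ≤ s⁻¹ * (s * (Metric.infDist z Ω - Metric.infDist x Ω) + ε * s * ‖z - x‖) :=
        mul_le_mul_of_nonneg_left h3 (inv_nonneg.2 hs.le)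
    _ = Metric.infDist z Ω - Metric.infDist x Ω + ε * ‖z - x‖ := by
        field_simp

/-- L4: Fréchet subgradients of `d` have norm at most `1`. -/
lemma fs_norm_le {v x : Eu n} (h : FS Ω v x) : ‖v‖ ≤ 1 := by
  by_contra hc
  push_neg at hc
  have hv0 : 0 < ‖v‖ := by linarith
  set ε := (‖v‖ - 1)/2 with hε
  obtain ⟨δ, hδ, hδ'⟩ := h ε (by rw [hε]; linarith)
  set t := δ / (2 * ‖v‖) with ht
  have ht0 : 0 < t := by positivity
  have htv : t * ‖v‖ = δ / 2 := by
    rw [ht]; field_simp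
  have hz : ‖(x + t • v) - x‖ < δ := by
    have h1 : (x + t • v) - x = t • v := by abel
    rw [h1, norm_smul, Real.norm_eq_abs, abs_of_pos ht0, htv]
    linarith
  have key := hδ' _ hz
  have he : (x + t • v) - x = t • v := by abel
  rw [he, real_inner_smul_right, real_inner_self_eq_norm_sq, norm_smul, Real.norm_eq_abs,
    abs_of_pos ht0] at key
  have hlip : Metric.infDist (x + t • v) Ω - Metric.infDist x Ω ≤ t * ‖v‖ := by
    have := abs_d_sub (Ω := Ω) (x + t • v) x
    rw [he, norm_smul, Real.norm_eq_abs, abs_of_pos ht0] at this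
    exact le_trans (le_abs_self _) this
  nlinarith [key, hlip, mul_pos ht0 hv0, mul_pos (show (0:ℝ) < ‖v‖ - 1 by linarith) (mul_pos ht0 hv0)]

end Lemmas2
section Lemmas3
variable {n : ℕ} {Ω : Set (Eu n)}

/-- L5a: at points of `Ω`, a Fréchet subgradient of `d` is a Fréchet normal. -/
lemma fs_mem_nc {v x : Eu n} (hx : x ∈ Ω) (h : FS Ω v x) : v ∈ frechetNC Ω x := by
  refine ⟨hx, fun ε hε => ?_⟩
  obtain ⟨δ, hδ, hδ'⟩ := h ε hε
  refine ⟨δ, hδ, fun z hz hzδ => ?_⟩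
  have := hδ' z hzδ
  rw [Metric.infDist_zero_of_mem hz, Metric.infDist_zero_of_mem hx] at this
  linarith

/-- L5b: at points of `Ω`, Fréchet normals of norm at most one are Fréchet subgradients. -/
lemma nc_mem_fs (hne : Ω.Nonempty) (hcl : IsClosed Ω) {v x : Eu n} (hx : x ∈ Ω)
    (hv : v ∈ frechetNC Ω x) (hv1 : ‖v‖ ≤ 1) : FS Ω v x := by
  intro ε hε
  obtain ⟨δ₀, hδ₀, hδ'⟩ := hv.2 (ε/2) (by linarith)
  refine ⟨δ₀/2, by linarith, fun z hz => ?_⟩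
  obtain ⟨q, hq, hqd⟩ := hcl.exists_infDist_eq_dist hne z
  have hdzq : Metric.infDist z Ω = ‖z - q‖ := by rw [hqd, dist_eq_norm]
  have hdzx : Metric.infDist z Ω ≤ ‖z - x‖ := by
    rw [← dist_eq_norm]; exact Metric.infDist_le_dist_of_mem hx
  have hqx : ‖q - x‖ < δ₀ := by
    have : ‖q - x‖ ≤ ‖q - z‖ + ‖z - x‖ := norm_sub_le_norm_sub_add_norm_sub q z x
    have h2 : ‖q - z‖ = ‖z - q‖ := norm_sub_rev _ _
    have h3 : ‖z - q‖ ≤ ‖z - x‖ := by rw [← hdzq]; exact hdzx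
    linarith
  have hnq := hδ' q hq hqx
  have hsplit : ⟪v, z - x⟫ = ⟪v, z - q⟫ + ⟪v, q - x⟫ := by
    rw [← inner_add_right]; congr 1; abel
  have hCS : ⟪v, z - q⟫ ≤ ‖v‖ * ‖z - q‖ := real_inner_le_norm v (z - q)
  have hvzq : ⟪v, z - q⟫ ≤ ‖z - q‖ := by
    nlinarith [norm_nonneg (z - q)]
  have hqx2 : ‖q - x‖ ≤ 2 * ‖z - x‖ := by
    have : ‖q - x‖ ≤ ‖q - z‖ + ‖z - x‖ := norm_sub_le_norm_sub_add_norm_sub q z x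
    have h2 : ‖q - z‖ = ‖z - q‖ := norm_sub_rev _ _
    have h3 : ‖z - q‖ ≤ ‖z - x‖ := by rw [← hdzq]; exact hdzx
    linarith
  have hdx0 : Metric.infDist x Ω = 0 := Metric.infDist_zero_of_mem hx
  rw [hsplit, hdx0]
  have : (ε/2) * ‖q - x‖ ≤ (ε/2) * (2 * ‖z - x‖) := by
    apply mul_le_mul_of_nonneg_left hqx2; linarith
  rw [hdzq]
  linarith

end Lemmas3
section Lemmas4
variable {n : ℕ} {Ω : Set (Eu n)}

/-- Pure real arithmetic inequality for the sliding lemma. -/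
lemma sq_ineq_aux {δ ε I H P : ℝ} (hδ0 : 0 < δ) (hε : 0 < ε) (hH0 : 0 ≤ H)
    (hI1 : I ≤ H) (hI2 : -H ≤ I) (hH1 : H ≤ ε * δ) (hH2 : H ≤ δ/2)
    (hP0 : 0 ≤ P) (hPsq : P^2 = δ^2 - 2*(δ*I) + H^2) :
    P ≤ δ - I + ε * H := by
  have hq0 : 0 < δ - I + ε * H := by nlinarith
  have hsq2 : P^2 ≤ (δ - I + ε * H)^2 := by
    nlinarith [sq_nonneg I, mul_le_mul_of_nonneg_right hH1 hH0, sq_nonneg (ε*H),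
      mul_nonneg hε.le hH0, mul_le_mul_of_nonneg_right hH2 (mul_nonneg hε.le hH0)]
  nlinarith [hsq2, hq0, hP0]

/-- L6: outside `Ω`, a Fréchet subgradient of `d` is the unit vector away from
any nearest point. -/
lemma fs_eq_proj_dir (hne : Ω.Nonempty) (hcl : IsClosed Ω) {v x y : Eu n} (hx : x ∉ Ω)
    (hy : y ∈ Ω) (hyd : ‖x - y‖ = Metric.infDist x Ω) (h : FS Ω v x) :
    v = (Metric.infDist x Ω)⁻¹ • (x - y) := by
  set D := Metric.infDist x Ω with hD
  have hD0 : 0 < D := (hcl.notMem_iff_infDist_pos hne).mp hx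
  have hv1 : ‖v‖ ≤ 1 := fs_norm_le h
  have key : ⟪v, y - x⟫ ≤ -D := by
    apply le_of_forall_pos_le_add
    intro ε' hε'
    set ε := ε' / D with hε
    have hε0 : 0 < ε := by positivity
    obtain ⟨δ, hδ, hδ'⟩ := h ε hε0
    set t := min (1/2) (δ / (2 * D)) with htdef
    have ht0 : 0 < t := lt_min (by norm_num) (by positivity)
    have ht1 : t ≤ 1/2 := min_le_left _ _
    have htδ : t * D < δ := by
      have h1 : t ≤ δ / (2 * D) := min_le_right _ _
      have h2 := mul_le_mul_of_nonneg_right h1 hD0.le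
      have h3 : δ / (2 * D) * D = δ / 2 := by
        field_simp
      nlinarith
    have hyx : ‖y - x‖ = D := by rw [norm_sub_rev, hyd]
    have hzxn : ‖(x + t • (y - x)) - x‖ = t * D := by
      have e : (x + t • (y - x)) - x = t • (y - x) := by abel
      rw [e, norm_smul, Real.norm_eq_abs, abs_of_pos ht0, hyx]
    have hzy : (x + t • (y - x)) - y = (1 - t) • (x - y) := by module
    have hdz : Metric.infDist (x + t • (y - x)) Ω ≤ (1 - t) * D := by
      have h1 : Metric.infDist (x + t • (y - x)) Ω ≤ dist (x + t • (y - x)) y :=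
        Metric.infDist_le_dist_of_mem hy
      rw [dist_eq_norm, hzy, norm_smul, Real.norm_eq_abs,
        abs_of_pos (by linarith : (0:ℝ) < 1 - t), hyd] at h1
      exact h1
    have hthis := hδ' (x + t • (y - x)) (by rw [hzxn]; exact htδ)
    have e : (x + t • (y - x)) - x = t • (y - x) := by abel
    rw [e] at hthis
    rw [real_inner_smul_right, norm_smul, Real.norm_eq_abs, abs_of_pos ht0, hyx] at hthis
    -- hthis : t * ⟪v, y-x⟫ ≤ d z - D + ε * (t * D)
    have h2 : t * ⟪v, y - x⟫ ≤ t * (-D + ε * D) := by nlinarith [hthis, hdz]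
    have h3 : ⟪v, y - x⟫ ≤ -D + ε * D := le_of_mul_le_mul_left h2 ht0
    have h4 : ε * D = ε' := by rw [hε]; exact div_mul_cancel₀ ε' hD0.ne'
    linarith
  have hinner : D ≤ ⟪v, x - y⟫ := by
    have e : ⟪v, x - y⟫ = -⟪v, y - x⟫ := by
      rw [← inner_neg_right]; congr 1; abel
    linarith
  have hxy : ‖x - y‖ = D := hyd
  have hen : ‖D⁻¹ • (x - y)‖ = 1 := by
    rw [norm_smul, Real.norm_eq_abs, abs_of_pos (inv_pos.mpr hD0), hxy]
    exact inv_mul_cancel₀ hD0.ne'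
  have hve : 1 ≤ ⟪v, D⁻¹ • (x - y)⟫ := by
    rw [real_inner_smul_right]
    calc (1:ℝ) = D⁻¹ * D := (inv_mul_cancel₀ hD0.ne').symm
      _ ≤ D⁻¹ * ⟪v, x - y⟫ := mul_le_mul_of_nonneg_left hinner (inv_nonneg.2 hD0.le)
  have hnormsq : ‖v - D⁻¹ • (x - y)‖^2 = ‖v‖^2 - 2*⟪v, D⁻¹ • (x - y)⟫ + ‖D⁻¹ • (x - y)‖^2 :=
    norm_sub_sq_real v _
  have hle0 : ‖v - D⁻¹ • (x - y)‖^2 ≤ 0 := by nlinarith [norm_nonneg v]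
  have hsq0 : ‖v - D⁻¹ • (x - y)‖^2 = 0 := le_antisymm hle0 (sq_nonneg _)
  have hn0 : ‖v - D⁻¹ • (x - y)‖ = 0 := sq_eq_zero_iff.mp hsq0
  exact norm_sub_eq_zero_iff.mp hn0

/-- L7: subgradient of `d` at points slid back along the projection direction. -/
lemma fs_slide (hne : Ω.Nonempty) (hcl : IsClosed Ω) {x y : Eu n} (hx : x ∉ Ω)
    (hy : y ∈ Ω) (hyd : ‖x - y‖ = Metric.infDist x Ω) {δ : ℝ} (hδ0 : 0 < δ)
    (hδD : δ < Metric.infDist x Ω) :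
    FS Ω ((Metric.infDist x Ω)⁻¹ • (x - y)) (x - δ • ((Metric.infDist x Ω)⁻¹ • (x - y))) := by
  set D := Metric.infDist x Ω with hD
  have hD0 : 0 < D := (hcl.notMem_iff_infDist_pos hne).mp hx
  set v : Eu n := D⁻¹ • (x - y) with hv
  have hvn : ‖v‖ = 1 := by
    rw [hv, norm_smul, Real.norm_eq_abs, abs_of_pos (inv_pos.mpr hD0), hyd]
    exact inv_mul_cancel₀ hD0.ne'
  have hDv : D • v = x - y := by
    rw [hv, smul_smul, mul_inv_cancel₀ hD0.ne', one_smul]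
  have hxx' : x - (x - δ • v) = δ • v := by abel
  have hdx' : Metric.infDist (x - δ • v) Ω = D - δ := by
    have hle : Metric.infDist (x - δ • v) Ω ≤ D - δ := by
      have h1 : Metric.infDist (x - δ • v) Ω ≤ dist (x - δ • v) y :=
        Metric.infDist_le_dist_of_mem hy
      have h2 : (x - δ • v) - y = (D - δ) • v := by
        rw [sub_smul, hDv]; abel
      rw [dist_eq_norm, h2, norm_smul, Real.norm_eq_abs,
        abs_of_pos (by linarith : (0:ℝ) < D - δ), hvn, mul_one] at h1
      exact h1
    have hge : D - δ ≤ Metric.infDist (x - δ • v) Ω := by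
      have hl := lip_d (Ω := Ω) x (x - δ • v)
      rw [hxx', norm_smul, Real.norm_eq_abs, abs_of_pos hδ0, hvn, mul_one] at hl
      rw [← hD] at hl
      linarith
    linarith
  intro ε hε
  refine ⟨min (ε * δ) (δ/2), lt_min (by positivity) (by linarith), fun z hz => ?_⟩
  have hh1 : ‖z - (x - δ • v)‖ ≤ ε * δ := le_of_lt (lt_of_lt_of_le hz (min_le_left _ _))
  have hh2 : ‖z - (x - δ • v)‖ ≤ δ/2 := le_of_lt (lt_of_lt_of_le hz (min_le_right _ _))
  have hlow : D ≤ Metric.infDist z Ω + ‖x - z‖ := by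
    have := lip_d (Ω := Ω) x z
    rw [← hD] at this
    exact this
  have hxz : x - z = δ • v - (z - (x - δ • v)) := by module
  have hiph : |⟪v, z - (x - δ • v)⟫| ≤ ‖z - (x - δ • v)‖ := by
    have := abs_real_inner_le_norm v (z - (x - δ • v))
    rwa [hvn, one_mul] at this
  have hip1 : ⟪v, z - (x - δ • v)⟫ ≤ ‖z - (x - δ • v)‖ := le_trans (le_abs_self _) hiph
  have hip2 : -‖z - (x - δ • v)‖ ≤ ⟪v, z - (x - δ • v)⟫ := by
    have := neg_abs_le ⟪v, z - (x - δ • v)⟫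
    linarith [abs_nonneg ⟪v, z - (x - δ • v)⟫, hiph]
  have hsq : ‖δ • v - (z - (x - δ • v))‖^2
      = δ^2 - 2 * (δ * ⟪v, z - (x - δ • v)⟫) + ‖z - (x - δ • v)‖^2 := by
    rw [norm_sub_sq_real, norm_smul, Real.norm_eq_abs, abs_of_pos hδ0, hvn, mul_one,
      real_inner_smul_left]
    try ring
  have hkey : ‖δ • v - (z - (x - δ • v))‖
      ≤ δ - ⟪v, z - (x - δ • v)⟫ + ε * ‖z - (x - δ • v)‖ :=
    sq_ineq_aux hδ0 hε (norm_nonneg _) hip1 hip2 hh1 hh2 (norm_nonneg _) hsq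
  rw [hdx']
  have hnx : ‖x - z‖ = ‖δ • v - (z - (x - δ • v))‖ := by rw [hxz]
  linarith [hlow, hkey, hnx.le, hnx.ge]
end Lemmas4
section Lemmas5
variable {n : ℕ} {Ω : Set (Eu n)}

lemma tdi_comp {x : ℕ → Eu n} {u : Eu n} (h : TendstoDirInfty x u) {φ : ℕ → ℕ}
    (hφ : StrictMono φ) : TendstoDirInfty (fun k => x (φ k)) u :=
  ⟨h.1.comp hφ.tendsto_atTop, h.2.comp hφ.tendsto_atTop⟩

lemma tdi_perturb {x x' : ℕ → Eu n} {u : Eu n} (h : TendstoDirInfty x u)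
    (hd : Tendsto (fun k => ‖x' k - x k‖) atTop (𝓝 0)) : TendstoDirInfty x' u := by
  obtain ⟨h1, h2⟩ := h
  have hb : ∀ᶠ k in atTop, ‖x' k - x k‖ < 1 := hd.eventually_lt_const one_pos
  have h1' : Tendsto (fun k => ‖x' k‖) atTop atTop := by
    refine tendsto_atTop_mono' _ ?_ (tendsto_atTop_add_const_right _ (-1) h1)
    filter_upwards [hb] with k hk
    have := norm_sub_norm_le (x k) (x' k)
    have h3 : ‖x k - x' k‖ = ‖x' k - x k‖ := norm_sub_rev _ _
    linarith
  refine ⟨h1', ?_⟩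
  have hin : Tendsto (fun k => ‖x' k‖⁻¹) atTop (𝓝 0) := h1'.inv_tendsto_atTop
  have hpos' : ∀ᶠ k in atTop, 0 < ‖x' k‖ := h1'.eventually_gt_atTop 0
  have hpos : ∀ᶠ k in atTop, 0 < ‖x k‖ := h1.eventually_gt_atTop 0
  have t1 : Tendsto (fun k => ‖x' k‖⁻¹ • (x' k - x k)) atTop (𝓝 0) := by
    have hbnd : ∀ k, ‖‖x' k‖⁻¹ • (x' k - x k)‖ ≤ |‖x' k‖⁻¹| * ‖x' k - x k‖ := fun k =>
      le_of_eq (by rw [norm_smul, Real.norm_eq_abs])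
    exact squeeze_zero_norm hbnd (by simpa using hin.abs.mul hd)
  have e1 : Tendsto (fun k => (‖x k‖ - ‖x' k‖) * ‖x' k‖⁻¹) atTop (𝓝 0) := by
    have hbnd : ∀ᶠ k in atTop, ‖(‖x k‖ - ‖x' k‖) * ‖x' k‖⁻¹‖ ≤ ‖x' k - x k‖ * |‖x' k‖⁻¹| := by
      filter_upwards with k
      rw [Real.norm_eq_abs, abs_mul]
      apply mul_le_mul_of_nonneg_right _ (abs_nonneg _)
      have := abs_norm_sub_norm_le (x k) (x' k)
      have h3 : ‖x k - x' k‖ = ‖x' k - x k‖ := norm_sub_rev _ _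
      linarith
    exact squeeze_zero_norm' hbnd (by simpa using hd.mul hin.abs)
  have hrat : Tendsto (fun k => ‖x k‖ * ‖x' k‖⁻¹) atTop (𝓝 1) := by
    apply Tendsto.congr' _ (by simpa using e1.add (tendsto_const_nhds (x := (1:ℝ))))
    filter_upwards [hpos'] with k hk
    field_simp; ring
  have heq : (fun k => ‖x' k‖⁻¹ • (x' k - x k) + (‖x k‖ * ‖x' k‖⁻¹) • (‖x k‖⁻¹ • x k))
      =ᶠ[atTop] (fun k => ‖x' k‖⁻¹ • x' k) := by
    filter_upwards [hpos] with k hk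
    have h4 : (‖x k‖ * ‖x' k‖⁻¹) • (‖x k‖⁻¹ • x k) = ‖x' k‖⁻¹ • x k := by
      rw [smul_smul]
      congr 1
      rw [mul_comm ‖x k‖ (‖x' k‖⁻¹), mul_assoc, mul_inv_cancel₀ hk.ne', mul_one]
    rw [h4, smul_sub]
    abel
  have := (t1.add (hrat.smul h2)).congr' heq
  simpa using this

lemma infDist_ge_of_subset_ball (hne : Ω.Nonempty) {R : ℝ}
    (hR : Ω ⊆ Metric.closedBall 0 R) (x : Eu n) : ‖x‖ - R ≤ Metric.infDist x Ω := by
  by_contra hlt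
  push_neg at hlt
  obtain ⟨y, hy, hyd⟩ := (Metric.infDist_lt_iff hne).mp hlt
  have h1 : ‖y‖ ≤ R := mem_closedBall_zero_iff.mp (hR hy)
  have h2 : ‖x‖ - ‖y‖ ≤ dist x y := by
    rw [dist_eq_norm]; exact norm_sub_norm_le x y
  linarith

lemma tendsto_proj_dir_of_bounded {R : ℝ} (hne : Ω.Nonempty)
    (hR : Ω ⊆ Metric.closedBall 0 R) {x y : ℕ → Eu n} {u : Eu n}
    (hx : TendstoDirInfty x u) (hy : ∀ k, y k ∈ Ω) :
    Tendsto (fun k => (Metric.infDist (x k) Ω)⁻¹ • (x k - y k)) atTop (𝓝 u) := by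
  have hR0 : 0 ≤ R := by
    obtain ⟨y0, hy0⟩ := hne
    exact le_trans (norm_nonneg y0) (mem_closedBall_zero_iff.mp (hR hy0))
  have hdlow : ∀ k, ‖x k‖ - R ≤ Metric.infDist (x k) Ω := fun k =>
    infDist_ge_of_subset_ball hne hR (x k)
  have hdup : ∀ k, Metric.infDist (x k) Ω ≤ ‖x k‖ + R := by
    intro k
    have h1 : Metric.infDist (x k) Ω ≤ dist (x k) (y k) := Metric.infDist_le_dist_of_mem (hy k)
    have h2 : dist (x k) (y k) ≤ ‖x k‖ + ‖y k‖ := by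
      rw [dist_eq_norm]; exact norm_sub_le _ _
    have h3 : ‖y k‖ ≤ R := mem_closedBall_zero_iff.mp (hR (hy k))
    linarith
  have hdtop : Tendsto (fun k => Metric.infDist (x k) Ω) atTop atTop := by
    refine tendsto_atTop_mono' _ ?_ (tendsto_atTop_add_const_right _ (-R) hx.1)
    filter_upwards with k
    have := hdlow k
    simp only [sub_eq_add_neg] at this ⊢
    linarith
  have hdinv : Tendsto (fun k => (Metric.infDist (x k) Ω)⁻¹) atTop (𝓝 0) :=
    hdtop.inv_tendsto_atTop
  have hxpos : ∀ᶠ k in atTop, 0 < ‖x k‖ := hx.1.eventually_gt_atTop 0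
  have hxinv : Tendsto (fun k => ‖x k‖⁻¹) atTop (𝓝 0) := hx.1.inv_tendsto_atTop
  have hrat : Tendsto (fun k => Metric.infDist (x k) Ω * ‖x k‖⁻¹) atTop (𝓝 1) := by
    rw [← tendsto_sub_nhds_zero_iff]
    have hbnd : ∀ᶠ k in atTop,
        ‖Metric.infDist (x k) Ω * ‖x k‖⁻¹ - 1‖ ≤ R * ‖x k‖⁻¹ := by
      filter_upwards [hxpos] with k hk
      rw [Real.norm_eq_abs]
      have hd1 := hdlow k
      have hd2 := hdup k
      have e : Metric.infDist (x k) Ω * ‖x k‖⁻¹ - 1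
          = (Metric.infDist (x k) Ω - ‖x k‖) * ‖x k‖⁻¹ := by
        field_simp
      rw [e, abs_mul, abs_of_pos (inv_pos.mpr hk)]
      have habs : |Metric.infDist (x k) Ω - ‖x k‖| ≤ R := abs_le.mpr ⟨by linarith, by linarith⟩
      exact mul_le_mul_of_nonneg_right habs (inv_nonneg.2 hk.le)
    exact squeeze_zero_norm' hbnd (by simpa using hxinv.const_mul R)
  have hinvrat : Tendsto (fun k => ‖x k‖ * (Metric.infDist (x k) Ω)⁻¹) atTop (𝓝 1) := by
    have hdpos : ∀ᶠ k in atTop, 0 < Metric.infDist (x k) Ω := hdtop.eventually_gt_atTop 0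
    have := hrat.inv₀ one_ne_zero
    rw [inv_one] at this
    apply Tendsto.congr' _ this
    filter_upwards [hxpos, hdpos] with k h1 h2
    rw [mul_inv, inv_inv, mul_comm]
  have t1 : Tendsto (fun k => (Metric.infDist (x k) Ω)⁻¹ • x k) atTop (𝓝 u) := by
    have h5 := hinvrat.smul hx.2
    rw [one_smul] at h5
    apply Tendsto.congr' _ h5
    filter_upwards [hxpos] with k hk
    rw [smul_smul]
    congr 1
    rw [mul_comm ‖x k‖ ((Metric.infDist (x k) Ω)⁻¹), mul_assoc, mul_inv_cancel₀ hk.ne',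
      mul_one]
  have t2 : Tendsto (fun k => (Metric.infDist (x k) Ω)⁻¹ • y k) atTop (𝓝 0) := by
    have hbnd : ∀ᶠ k in atTop,
        ‖(Metric.infDist (x k) Ω)⁻¹ • y k‖ ≤ R * |(Metric.infDist (x k) Ω)⁻¹| := by
      filter_upwards with k
      rw [norm_smul, Real.norm_eq_abs, mul_comm]
      exact mul_le_mul_of_nonneg_right (mem_closedBall_zero_iff.mp (hR (hy k))) (abs_nonneg _)
    exact squeeze_zero_norm' hbnd (by simpa using hdinv.abs.const_mul R)
  have := t1.sub t2
  rw [sub_zero] at this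
  apply Tendsto.congr _ this
  intro k
  rw [smul_sub]

end Lemmas5
section Assembly
variable {n : ℕ} {Ω : Set (Eu n)}

/-- `𝔼 ⊆ ∂d(∞;u)`. -/
lemma Eset_subset (hne : Ω.Nonempty) (hcl : IsClosed Ω) {u : Eu n} :
    Eset Ω u ⊆ dirSubdiffInftyR (fun x => Metric.infDist x Ω) u := by
  rintro ξ ⟨x, y, hxΩ, hxu, hyk, hlim⟩
  have hD0 : ∀ k, 0 < Metric.infDist (x k) Ω := fun k =>
    (hcl.notMem_iff_infDist_pos hne).mp (hxΩ k)
  have hδ0 : ∀ k, 0 < min (Metric.infDist (x k) Ω / 2) (((k:ℝ)+1)⁻¹) := fun k =>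
    lt_min (by linarith [hD0 k]) (by positivity)
  have hδD : ∀ k, min (Metric.infDist (x k) Ω / 2) (((k:ℝ)+1)⁻¹) < Metric.infDist (x k) Ω :=
    fun k => lt_of_le_of_lt (min_le_left _ _) (by linarith [hD0 k])
  have hvn : ∀ k, ‖(Metric.infDist (x k) Ω)⁻¹ • (x k - y k)‖ = 1 := by
    intro k
    rw [norm_smul, Real.norm_eq_abs, abs_of_pos (inv_pos.mpr (hD0 k)), (hyk k).2]
    exact inv_mul_cancel₀ (hD0 k).ne'
  have hFS : ∀ k, FS Ω ((Metric.infDist (x k) Ω)⁻¹ • (x k - y k))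
      (x k - min (Metric.infDist (x k) Ω / 2) (((k:ℝ)+1)⁻¹) •
        ((Metric.infDist (x k) Ω)⁻¹ • (x k - y k))) := fun k =>
    fs_slide hne hcl (hxΩ k) (hyk k).1 (hyk k).2 (hδ0 k) (hδD k)
  have hpert : Tendsto (fun k => ‖(x k - min (Metric.infDist (x k) Ω / 2) (((k:ℝ)+1)⁻¹) •
      ((Metric.infDist (x k) Ω)⁻¹ • (x k - y k))) - x k‖) atTop (𝓝 0) := by
    have hb : ∀ k, ‖(x k - min (Metric.infDist (x k) Ω / 2) (((k:ℝ)+1)⁻¹) •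
        ((Metric.infDist (x k) Ω)⁻¹ • (x k - y k))) - x k‖ ≤ ((k:ℝ)+1)⁻¹ := by
      intro k
      have e : (x k - min (Metric.infDist (x k) Ω / 2) (((k:ℝ)+1)⁻¹) •
          ((Metric.infDist (x k) Ω)⁻¹ • (x k - y k))) - x k
          = -(min (Metric.infDist (x k) Ω / 2) (((k:ℝ)+1)⁻¹) •
            ((Metric.infDist (x k) Ω)⁻¹ • (x k - y k))) := by abel
      rw [e, norm_neg, norm_smul, Real.norm_eq_abs, abs_of_pos (hδ0 k), hvn k, mul_one]
      exact min_le_right _ _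
    refine squeeze_zero (fun k => norm_nonneg _) hb ?_
    simpa [one_div] using (tendsto_one_div_add_atTop_nhds_zero_nat : Tendsto (fun n : ℕ => 1 / ((n:ℝ) + 1)) atTop (𝓝 0))
  refine ⟨_, fun k => Metric.infDist ((x k - min (Metric.infDist (x k) Ω / 2) (((k:ℝ)+1)⁻¹) •
      ((Metric.infDist (x k) Ω)⁻¹ • (x k - y k)))) Ω,
    fun k => ((Metric.infDist (x k) Ω)⁻¹ • (x k - y k), -1),
    tdi_perturb hxu hpert, fun k => le_refl _, fun k => fs_to_ncp (hFS k),
    hlim.prodMk_nhds tendsto_const_nhds⟩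

/-- `N(∞;u) ∩ 𝔹 ⊆ ∂d(∞;u)`. -/
lemma NC_subset (hne : Ω.Nonempty) (hcl : IsClosed Ω) {u : Eu n} :
    dirNCInfty Ω u ∩ Metric.closedBall (0 : Eu n) 1 ⊆
      dirSubdiffInftyR (fun x => Metric.infDist x Ω) u := by
  rintro ξ ⟨⟨x, w, hxΩ, hxu, hwnc, hwlim⟩, hball⟩
  have hξ1 : ‖ξ‖ ≤ 1 := mem_closedBall_zero_iff.mp hball
  have hmax : ∀ k, (0:ℝ) < max 1 ‖w k‖ := fun k => lt_of_lt_of_le one_pos (le_max_left _ _)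
  have hnc' : ∀ k, (max 1 ‖w k‖)⁻¹ • w k ∈ frechetNC Ω (x k) := by
    intro k
    obtain ⟨hmem, hcon⟩ := hwnc k
    refine ⟨hmem, fun ε hε => ?_⟩
    obtain ⟨δ, hδ, hδ'⟩ := hcon ε hε
    refine ⟨δ, hδ, fun z hz hzδ => ?_⟩
    have h1 := hδ' z hz hzδ
    rw [real_inner_smul_left]
    have hc1 : (max 1 ‖w k‖)⁻¹ ≤ 1 := inv_le_one_of_one_le₀ (le_max_left _ _)
    have h0 : 0 ≤ ε * ‖z - x k‖ := by
      have := norm_nonneg (z - x k); positivity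
    have h2 : (max 1 ‖w k‖)⁻¹ * ⟪w k, z - x k⟫ ≤ (max 1 ‖w k‖)⁻¹ * (ε * ‖z - x k‖) :=
      mul_le_mul_of_nonneg_left h1 (inv_pos.mpr (hmax k)).le
    have h3 : (max 1 ‖w k‖)⁻¹ * (ε * ‖z - x k‖) ≤ 1 * (ε * ‖z - x k‖) :=
      mul_le_mul_of_nonneg_right hc1 h0
    linarith
  have hv1 : ∀ k, ‖(max 1 ‖w k‖)⁻¹ • w k‖ ≤ 1 := by
    intro k
    rw [norm_smul, Real.norm_eq_abs, abs_of_pos (inv_pos.mpr (hmax k))]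
    calc (max 1 ‖w k‖)⁻¹ * ‖w k‖ ≤ (max 1 ‖w k‖)⁻¹ * max 1 ‖w k‖ :=
          mul_le_mul_of_nonneg_left (le_max_right _ _) (inv_pos.mpr (hmax k)).le
      _ = 1 := inv_mul_cancel₀ (hmax k).ne'
  have hvlim : Tendsto (fun k => (max 1 ‖w k‖)⁻¹ • w k) atTop (𝓝 ξ) := by
    have h1 : Tendsto (fun k => max 1 ‖w k‖) atTop (𝓝 (max 1 ‖ξ‖)) :=
      tendsto_const_nhds.max hwlim.norm
    rw [max_eq_left hξ1] at h1
    have h3 := (h1.inv₀ one_ne_zero).smul hwlim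
    rw [inv_one, one_smul] at h3
    exact h3
  have hFS : ∀ k, FS Ω ((max 1 ‖w k‖)⁻¹ • w k) (x k) := fun k =>
    nc_mem_fs hne hcl (hxΩ k) (hnc' k) (hv1 k)
  exact ⟨x, fun k => Metric.infDist (x k) Ω, fun k => ((max 1 ‖w k‖)⁻¹ • w k, -1), hxu,
    fun k => le_refl _, fun k => fs_to_ncp (hFS k), hvlim.prodMk_nhds tendsto_const_nhds⟩

/-- Forward inclusion. -/
lemma forward_incl (hne : Ω.Nonempty) (hcl : IsClosed Ω) {u : Eu n} :
    dirSubdiffInftyR (fun x => Metric.infDist x Ω) u ⊆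
      (dirNCInfty Ω u ∩ Metric.closedBall (0 : Eu n) 1) ∪ Eset Ω u := by
  rintro ξ ⟨x, r, w, hxu, hr, hw, hwlim⟩
  have hsnd : Tendsto (fun k => (w k).2) atTop (𝓝 (-1)) :=
    (continuous_snd.tendsto _).comp hwlim
  have hfst : Tendsto (fun k => (w k).1) atTop (𝓝 ξ) :=
    (continuous_fst.tendsto _).comp hwlim
  have hEs : ∀ᶠ k in atTop, (w k).2 < -(1/2) := hsnd.eventually_lt_const (by norm_num)
  have hvlim : Tendsto (fun k => (-(w k).2)⁻¹ • (w k).1) atTop (𝓝 ξ) := by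
    have h1 : Tendsto (fun k => -(w k).2) atTop (𝓝 1) := by simpa using hsnd.neg
    have h2 := (h1.inv₀ one_ne_zero).smul hfst
    rw [inv_one, one_smul] at h2
    exact h2
  have hkey : ∀ᶠ k in atTop, FS Ω ((-(w k).2)⁻¹ • (w k).1) (x k) ∧
      r k = Metric.infDist (x k) Ω := by
    filter_upwards [hEs] with k hk
    have hs : 0 < -(w k).2 := by linarith
    have hww : ((w k).1, -(-(w k).2)) ∈
        frechetNCP (epigraphR (fun z => Metric.infDist z Ω)) (x k, r k) := by
      rw [neg_neg]; exact hw k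
    obtain ⟨h1, h2⟩ := ncp_to_fs hs hww
    exact ⟨h2, h1⟩
  by_cases hinf : ∃ᶠ k in atTop, x k ∈ Ω
  · left
    obtain ⟨φ, hφ, hP⟩ := extraction_of_frequently_atTop (hinf.and_eventually hkey)
    have hnorm : ‖ξ‖ ≤ 1 := by
      apply le_of_tendsto ((hvlim.comp hφ.tendsto_atTop).norm)
      filter_upwards with k
      exact fs_norm_le (hP k).2.1
    exact ⟨⟨fun k => x (φ k), fun k => (-(w (φ k)).2)⁻¹ • (w (φ k)).1, fun k => (hP k).1,
      tdi_comp hxu hφ, fun k => fs_mem_nc (hP k).1 (hP k).2.1, hvlim.comp hφ.tendsto_atTop⟩,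
      mem_closedBall_zero_iff.mpr hnorm⟩
  · right
    have hev : ∀ᶠ k in atTop, x k ∉ Ω := not_frequently.mp hinf
    choose Y hY1 hY2 using fun k => hcl.exists_infDist_eq_dist hne (x k)
    obtain ⟨φ, hφ, hP⟩ := extraction_of_frequently_atTop ((hev.and hkey).frequently)
    refine ⟨fun k => x (φ k), fun k => Y (φ k), fun k => (hP k).1, tdi_comp hxu hφ,
      fun k => ⟨hY1 (φ k), by rw [← dist_eq_norm, ← hY2 (φ k)]⟩, ?_⟩
    have he : ∀ k, (Metric.infDist (x (φ k)) Ω)⁻¹ • (x (φ k) - Y (φ k))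
        = (-(w (φ k)).2)⁻¹ • (w (φ k)).1 := fun k =>
      (fs_eq_proj_dir hne hcl (hP k).1 (hY1 (φ k))
        (by rw [← dist_eq_norm, ← hY2 (φ k)]) (hP k).2.1).symm
    exact Tendsto.congr (fun k => (he k).symm) (hvlim.comp hφ.tendsto_atTop)

lemma NC_empty_of_bounded (hb : Bornology.IsBounded Ω) {u : Eu n} : dirNCInfty Ω u = ∅ := by
  ext ξ
  simp only [Set.mem_empty_iff_false, iff_false]
  rintro ⟨x, w, hxΩ, ⟨hxn, _⟩, _, _⟩
  obtain ⟨R, hR⟩ := hb.subset_closedBall (0 : Eu n)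
  obtain ⟨k, hk⟩ := (hxn.eventually_ge_atTop (R+1)).exists
  have := mem_closedBall_zero_iff.mp (hR (hxΩ k))
  linarith

lemma u_mem_Eset (hne : Ω.Nonempty) (hcl : IsClosed Ω) (hb : Bornology.IsBounded Ω)
    {u : Eu n} (hu : ‖u‖ = 1) : u ∈ Eset Ω u := by
  obtain ⟨R, hR⟩ := hb.subset_closedBall (0 : Eu n)
  have hR0 : 0 ≤ R := by
    obtain ⟨y0, hy0⟩ := hne
    exact le_trans (norm_nonneg y0) (mem_closedBall_zero_iff.mp (hR hy0))
  have hc0 : ∀ k : ℕ, (0:ℝ) < (k:ℝ) + R + 1 := fun k => by positivity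
  have hxn : ∀ k : ℕ, ‖(((k:ℝ) + R + 1) • u : Eu n)‖ = (k:ℝ) + R + 1 := by
    intro k
    rw [norm_smul, hu, mul_one, Real.norm_eq_abs, abs_of_pos (hc0 k)]
  have hxu : TendstoDirInfty (fun k : ℕ => (((k:ℝ) + R + 1) • u : Eu n)) u := by
    constructor
    · apply Tendsto.congr (fun k => (hxn k).symm)
      apply Tendsto.congr (f₁ := fun k : ℕ => (k:ℝ) + (R + 1)) (fun k => by ring)
      exact tendsto_atTop_add_const_right _ (R+1) tendsto_natCast_atTop_atTop
    · apply Tendsto.congr (f₁ := fun _ : ℕ => u) _ tendsto_const_nhds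
      intro k
      rw [hxn k, smul_smul, inv_mul_cancel₀ (hc0 k).ne', one_smul]
  have hxnot : ∀ k : ℕ, (((k:ℝ) + R + 1) • u : Eu n) ∉ Ω := by
    intro k hkΩ
    have h1 := mem_closedBall_zero_iff.mp (hR hkΩ)
    rw [hxn k] at h1
    have h2 : (0:ℝ) ≤ (k:ℝ) := Nat.cast_nonneg k
    linarith
  choose Y hY1 hY2 using fun k : ℕ =>
    hcl.exists_infDist_eq_dist hne (((k:ℝ) + R + 1) • u : Eu n)
  exact ⟨_, Y, hxnot, hxu, fun k => ⟨hY1 k, by rw [← dist_eq_norm, ← hY2 k]⟩,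
    tendsto_proj_dir_of_bounded hne hR hxu hY1⟩

end Assembly
/-- Directional subdifferential at infinity of the distance function. -/
theorem dirSubdiffInfty_distance {n : ℕ} (Ω : Set (Eu n)) (hne : Ω.Nonempty)
    (hcl : IsClosed Ω) (u : Eu n) (hu : ‖u‖ = 1) :
    (¬ Bornology.IsBounded Ω →
      dirSubdiffInftyR (fun x => Metric.infDist x Ω) u =
        (dirNCInfty Ω u ∩ Metric.closedBall (0 : Eu n) 1) ∪ Eset Ω u) ∧
    (Bornology.IsBounded Ω →
      dirSubdiffInftyR (fun x => Metric.infDist x Ω) u = {u}) := by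
  constructor
  · intro _
    exact Set.Subset.antisymm (forward_incl hne hcl)
      (Set.union_subset (NC_subset hne hcl) (Eset_subset hne hcl))
  · intro hb
    apply Set.Subset.antisymm
    · intro ξ hξ
      rcases forward_incl hne hcl hξ with h | h
      · rw [NC_empty_of_bounded hb] at h
        exact absurd h.1 (Set.notMem_empty ξ)
      · obtain ⟨x, y, hxΩ, hxu, hyk, hlim⟩ := h
        obtain ⟨R, hR⟩ := hb.subset_closedBall (0 : Eu n)
        have h2 := tendsto_proj_dir_of_bounded hne hR hxu (fun k => (hyk k).1)
        have h3 := tendsto_nhds_unique hlim h2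
        exact h3 ▸ rfl
    · rw [Set.singleton_subset_iff]
      exact Eset_subset hne hcl (u_mem_Eset hne hcl hb hu)
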